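/- Let c₊ = (1 + i√3)/2 and c₋ = (1 − i√3)/2 in ℂ (the two roots of c² − c + 1 = 0), let f₁(x) = −3/x⁵ and L(h₁)(x,y) = 3(x+y)/(x³y³). Then for every nonzero complex y: f₁(c₊y) − f₁(c₋y) = L(h₁)(c₊y, y) − L(h₁)(c₋y, y). That is, f₁(x) = −3/x⁵ solves the continuous decoupling equation for the scaling limit of the tandem walk. -/

import Mathlib

/-!
Both `c₊` and `c₋` are roots of `c² - c + 1`, so `c³ = -1`. For such a root,
`f₁(cy) = -3c/y⁵` and `L(h₁)(cy, y) = -3(c+1)/y⁵`, hence `f₁(cy) - L(h₁)(cy, y) = 3/y⁵`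
does not depend on the choice of root, and the two sides of the decoupling equation agree.
-/

theorem sq_sub_self_add_one_eq_zero_of_sq_eq_neg_three {K : Type*} [Field K] (h2 : (2 : K) ≠ 0)
    {s : K} (hs : s ^ 2 = -3) : ((1 + s) / 2) ^ 2 - (1 + s) / 2 + 1 = 0 := by
  field_simp
  linear_combination hs

theorem Complex.I_mul_sqrt_three_sq : (Complex.I * Real.sqrt 3) ^ 2 = -3 := by
  rw [mul_pow, Complex.I_sq, ← Complex.ofReal_pow, Real.sq_sqrt (by norm_num)]
  norm_num

theorem pow_three_eq_neg_one_of_sq_sub_self_add_one_eq_zero {K : Type*} [CommRing K] {c : K}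
    (hc : c ^ 2 - c + 1 = 0) : c ^ 3 = -1 := by
  linear_combination (c + 1) * hc

theorem neg_three_div_pow_five_sub_eq_of_sq_sub_self_add_one_eq_zero {K : Type*} [Field K]
    {c y : K} (hc : c ^ 2 - c + 1 = 0) (hy : y ≠ 0) :
    -3 / (c * y) ^ 5 - 3 * (c * y + y) / ((c * y) ^ 3 * y ^ 3) = 3 / y ^ 5 := by
  have hc3 := pow_three_eq_neg_one_of_sq_sub_self_add_one_eq_zero hc
  have hc0 : c ≠ 0 := by
    rintro rfl
    norm_num at hc
  have hf : -3 / (c * y) ^ 5 = -3 * c / y ^ 5 := by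
    rw [div_eq_div_iff (by positivity) (by positivity)]
    linear_combination (3 * c ^ 3 * y ^ 5 - 3 * y ^ 5) * hc3
  have hL : 3 * (c * y + y) / ((c * y) ^ 3 * y ^ 3) = -3 * (c + 1) / y ^ 5 := by
    rw [div_eq_div_iff (by positivity) (by positivity)]
    linear_combination (3 * (c + 1) * y ^ 6) * hc3
  rw [hf, hL]
  ring

theorem tandem_continuous_decoupling
    (cp cm : ℂ) (hcp : cp = (1 + Complex.I * Real.sqrt 3) / 2)
    (hcm : cm = (1 - Complex.I * Real.sqrt 3) / 2)
    (f₁ : ℂ → ℂ) (hf₁ : ∀ x : ℂ, f₁ x = -3 / x ^ 5)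
    (L : ℂ → ℂ → ℂ) (hL : ∀ x y : ℂ, L x y = 3 * (x + y) / (x ^ 3 * y ^ 3)) :
    ∀ y : ℂ, y ≠ 0 → f₁ (cp * y) - f₁ (cm * y) = L (cp * y) y - L (cm * y) y := by
  intro y hy
  have hcp_root : cp ^ 2 - cp + 1 = 0 := by
    rw [hcp]
    exact sq_sub_self_add_one_eq_zero_of_sq_eq_neg_three two_ne_zero Complex.I_mul_sqrt_three_sq
  have hcm_root : cm ^ 2 - cm + 1 = 0 := by
    rw [hcm, sub_eq_add_neg 1]
    refine sq_sub_self_add_one_eq_zero_of_sq_eq_neg_three two_ne_zero ?_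
    rw [neg_sq, Complex.I_mul_sqrt_three_sq]
  rw [hf₁, hf₁, hL, hL]
  linear_combination neg_three_div_pow_five_sub_eq_of_sq_sub_self_add_one_eq_zero hcp_root hy -
    neg_three_div_pow_five_sub_eq_of_sq_sub_self_add_one_eq_zero hcm_root hy
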